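/- arXiv:0801.4959 — 2 statements merged into one kernel-verified Lean document; each statement's English description precedes it below -/
import Mathlib

section
/- If f is in the form domain W^{1,2} (i.e. f ∈ L²((0,1), w dx) with ∫₀¹ p|f'|² dx < ∞, f absolutely continuous on compact subintervals of (0,1)), then f extends continuously to [0,1) and f(0) = 0. -/
/-! Away from `x = 1` the weight `p` is bounded below by a positive constant, so `∫ p |f'|² < ∞`
makes `f'` integrable on `(0, b)` for every `b < 1`; hence `f = f (1/2) + ∫_{1/2}^x f'` extends
continuously to `[0, 1)`. Since `x w(x) → 1` as `x → 0+`, a nonzero limit `f(0+)` would make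
`|f|² w` dominate a multiple of `1/x` near `0`, contradicting `f ∈ L²(w dx)`. -/

open MeasureTheory Set Filter Topology

noncomputable def pp (ε x : ℝ) : ℝ := (1 - x) ^ ((1:ℝ) + 1/ε) * (1 + x) ^ ((1:ℝ) - 1/ε)

noncomputable def ww (ε x : ℝ) : ℝ := x⁻¹ * (1 - x) ^ ((1:ℝ)/ε) * (1 + x) ^ (-(1:ℝ)/ε)

theorem integrableOn_of_integrableOn_mul_sq_norm {α E : Type*} [MeasurableSpace α]
    [NormedAddCommGroup E] {μ : Measure α} {s : Set α} {g : α → E} {p : α → ℝ} {c : ℝ}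
    (hs : MeasurableSet s) (hμs : μ s ≠ ⊤) (hc : 0 < c) (hp : ∀ x ∈ s, c ≤ p x)
    (hg : AEStronglyMeasurable g (μ.restrict s))
    (h : IntegrableOn (fun x => p x * ‖g x‖ ^ 2) s μ) : IntegrableOn g s μ := by
  refine Integrable.mono' ((h.const_mul c⁻¹).add (integrableOn_const (C := (1:ℝ)) hμs)) hg ?_
  filter_upwards [ae_restrict_mem hs] with x hx
  have h_sq : ‖g x‖ ^ 2 ≤ c⁻¹ * (p x * ‖g x‖ ^ 2) := by
    rw [le_inv_mul_iff₀ hc]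
    gcongr
    exact hp x hx
  simp only [Pi.add_apply]
  nlinarith [sq_nonneg (‖g x‖ - 1)]

theorem locallyIntegrableOn_Ioo_of_intervalIntegrable {E : Type*} [NormedAddCommGroup E]
    {f : ℝ → E} {l u : ℝ}
    (hf : ∀ a ∈ Ioo l u, ∀ b ∈ Ioo l u, IntervalIntegrable f volume a b) :
    LocallyIntegrableOn f (Ioo l u) volume := by
  rw [locallyIntegrableOn_iff isOpen_Ioo.isLocallyClosed]
  intro k hk hkc
  rcases k.eq_empty_or_nonempty with rfl | hne
  · exact integrableOn_empty
  have hInf := hk (hkc.sInf_mem hne)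
  have hSup := hk (hkc.sSup_mem hne)
  refine ((intervalIntegrable_iff_integrableOn_Icc_of_le ?_).1 (hf _ hInf _ hSup)).mono_set ?_
  · exact csInf_le_csSup hne hkc.bddBelow hkc.bddAbove
  · exact fun x hx => ⟨csInf_le hkc.bddBelow hx, le_csSup hkc.bddAbove hx⟩

theorem continuousOn_Ico_of_forall_continuousOn_Icc {α β : Type*} [LinearOrder α]
    [TopologicalSpace α] [OrderTopology α] [DenselyOrdered α] [TopologicalSpace β]
    {g : α → β} {a c : α} (h : ∀ b ∈ Ioo a c, ContinuousOn g (Icc a b)) :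
    ContinuousOn g (Ico a c) := by
  refine continuousOn_of_locally_continuousOn fun x hx => ?_
  obtain ⟨b, hxb, hbc⟩ := exists_between hx.2
  exact ⟨Iio b, isOpen_Iio, hxb, (h b ⟨hx.1.trans_lt hxb, hbc⟩).mono
    fun y hy => ⟨hy.1.1, hy.2.le⟩⟩

theorem continuousOn_primitive_Ico {E : Type*} [NormedAddCommGroup E] [NormedSpace ℝ E]
    {f : ℝ → E} {a c x₀ : ℝ} (hf : ∀ b ∈ Ioo a c, IntervalIntegrable f volume a b)
    (hx₀ : x₀ ∈ Ico a c) : ContinuousOn (fun x => ∫ t in x₀..x, f t) (Ico a c) := by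
  refine continuousOn_Ico_of_forall_continuousOn_Icc fun b hb => ?_
  have hb' : max b x₀ ∈ Ioo a c := ⟨hb.1.trans_le (le_max_left _ _), max_lt hb.2 hx₀.2⟩
  have hle : a ≤ max b x₀ := hb'.1.le
  have := intervalIntegral.continuousOn_primitive_interval' (hf _ hb')
    (by rw [uIcc_of_le hle]; exact ⟨hx₀.1, le_max_right _ _⟩)
  rw [uIcc_of_le hle] at this
  exact this.mono (Icc_subset_Icc_right (le_max_left _ _))

theorem eq_zero_of_tendsto_of_integrableOn_div {F : ℝ → ℝ} {L a : ℝ} (ha : 0 < a)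
    (hF : Tendsto F (𝓝[>] 0) (𝓝 L)) (hint : IntegrableOn (fun x => F x / x) (Ioo 0 a)) :
    L = 0 := by
  by_contra hL
  have hL' : 0 < |L| / 2 := by positivity
  have hev : {x | |L| / 2 < ‖F x‖} ∩ Ioo 0 a ∈ 𝓝[>] 0 :=
    inter_mem (hF.norm.eventually (eventually_gt_nhds (half_lt_self (abs_pos.2 hL))))
      (Ioo_mem_nhdsGT ha)
  obtain ⟨u, hu : 0 < u, hsub⟩ := mem_nhdsGT_iff_exists_Ioo_subset.1 hev
  have hinv : IntegrableOn (fun x : ℝ => x⁻¹) (Ioo 0 u) := by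
    refine Integrable.mono' ((hint.mono_set fun x hx => (hsub hx).2).norm.const_mul (|L| / 2)⁻¹)
      measurable_inv.aestronglyMeasurable ?_
    filter_upwards [ae_restrict_mem measurableSet_Ioo] with x hx
    have hx0 := inv_nonneg.2 hx.1.le
    rw [norm_div, Real.norm_of_nonneg hx.1.le, Real.norm_of_nonneg hx0, le_inv_mul_iff₀ hL',
      div_eq_mul_inv]
    exact mul_le_mul_of_nonneg_right (hsub hx).1.le hx0
  have := (intervalIntegrable_iff_integrableOn_Ioo_of_le hu.le).2 hinv
  simp only [intervalIntegrable_inv_iff, hu.ne, uIcc_of_le hu.le, false_or, mem_Icc, le_refl,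
    true_and, not_le] at this
  linarith

theorem continuousOn_pp (ε : ℝ) : ContinuousOn (pp ε) (Ioo (-1) 1) := by
  unfold pp
  refine ContinuousOn.mul ?_ ?_ <;> refine ContinuousOn.rpow_const (by fun_prop) ?_ <;>
    intro x hx <;> left <;> linarith [hx.1, hx.2]

theorem pp_pos (ε : ℝ) {x : ℝ} (hx : x ∈ Ioo (-1) 1) : 0 < pp ε x :=
  mul_pos (Real.rpow_pos_of_pos (by linarith [hx.2]) _)
    (Real.rpow_pos_of_pos (by linarith [hx.1]) _)

theorem integrableOn_Ioo_zero_of_integrableOn_pp_mul_sq_norm (ε : ℝ) {f' : ℝ → ℂ}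
    (hf' : ∀ a ∈ Ioo (0:ℝ) 1, ∀ b ∈ Ioo (0:ℝ) 1, IntervalIntegrable f' volume a b)
    (hQ : IntegrableOn (fun x => pp ε x * ‖f' x‖ ^ 2) (Ioo (0:ℝ) 1) volume)
    {b : ℝ} (hb : b ∈ Ioo (0:ℝ) 1) : IntegrableOn f' (Ioo 0 b) volume := by
  have hsub : Icc 0 b ⊆ Ioo (-1) 1 := Icc_subset_Ioo (by norm_num) hb.2
  obtain ⟨c, hc, hcp⟩ := isCompact_Icc.exists_forall_le' ((continuousOn_pp ε).mono hsub)
    fun x hx => pp_pos ε (hsub hx)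
  have hsub' : Ioo 0 b ⊆ Ioo 0 1 := Ioo_subset_Ioo_right hb.2.le
  exact integrableOn_of_integrableOn_mul_sq_norm measurableSet_Ioo measure_Ioo_lt_top.ne hc
    (fun x hx => hcp x (Ioo_subset_Icc_self hx))
    ((locallyIntegrableOn_Ioo_of_intervalIntegrable hf').aestronglyMeasurable.mono_set hsub')
    (hQ.mono_set hsub')

theorem tendsto_mul_ww_nhdsGT_zero (ε : ℝ) :
    Tendsto (fun x => x * ww ε x) (𝓝[>] 0) (𝓝 1) := by
  have hlim : Tendsto (fun x : ℝ => (1 - x) ^ ((1:ℝ)/ε) * (1 + x) ^ (-(1:ℝ)/ε)) (𝓝 0)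
      (𝓝 ((1 - 0) ^ ((1:ℝ)/ε) * (1 + 0) ^ (-(1:ℝ)/ε))) :=
    ((tendsto_const_nhds.sub tendsto_id).rpow_const (by norm_num)).mul
      ((tendsto_const_nhds.add tendsto_id).rpow_const (by norm_num))
  simp only [sub_zero, add_zero, Real.one_rpow, mul_one] at hlim
  refine (hlim.mono_left nhdsWithin_le_nhds).congr' ?_
  filter_upwards [self_mem_nhdsWithin] with x (hx : 0 < x)
  simp only [ww, mul_assoc, mul_inv_cancel_left₀ hx.ne']

theorem form_domain_continuous_vanishes_at_zero_general (ε : ℝ)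
    (f f' : ℝ → ℂ)
    (hAC : ∀ a ∈ Ioo (0:ℝ) 1, ∀ b ∈ Ioo (0:ℝ) 1,
      IntervalIntegrable f' volume a b ∧ f b - f a = ∫ x in a..b, f' x)
    (hL2 : IntegrableOn (fun x => ‖f x‖ ^ 2 * ww ε x) (Ioo (0:ℝ) 1) volume)
    (hQ : IntegrableOn (fun x => pp ε x * ‖f' x‖ ^ 2) (Ioo (0:ℝ) 1) volume) :
    ∃ g : ℝ → ℂ, ContinuousOn g (Ico (0:ℝ) 1) ∧ g 0 = 0 ∧ EqOn g f (Ioo (0:ℝ) 1) := by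
  have h_half : (1/2 : ℝ) ∈ Ioo 0 1 := by norm_num
  set g : ℝ → ℂ := fun x => f (1/2) + ∫ t in (1/2:ℝ)..x, f' t
  have hEq : EqOn g f (Ioo 0 1) := fun x hx => by
    simp only [g, ← (hAC _ h_half x hx).2, add_sub_cancel]
  have hcont : ContinuousOn g (Ico 0 1) :=
    continuousOn_const.add <| continuousOn_primitive_Ico (fun b hb =>
      (intervalIntegrable_iff_integrableOn_Ioo_of_le hb.1.le).2 <|
        integrableOn_Ioo_zero_of_integrableOn_pp_mul_sq_norm ε
          (fun a ha b hb => (hAC a ha b hb).1) hQ hb) (Ioo_subset_Ico_self h_half)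
  have hlim : Tendsto f (𝓝[>] 0) (𝓝 (g 0)) :=
    ((hcont 0 ⟨le_rfl, one_pos⟩).tendsto.mono_left (nhdsWithin_le_of_mem
      (mem_of_superset (Ioo_mem_nhdsGT one_pos) Ioo_subset_Ico_self))).congr'
      (eventually_of_mem (Ioo_mem_nhdsGT one_pos) hEq)
  have hg0 := eq_zero_of_tendsto_of_integrableOn_div one_pos
    ((hlim.norm.pow 2).mul (tendsto_mul_ww_nhdsGT_zero ε))
    (hL2.congr_fun (fun x hx => by rw [mul_div_assoc, mul_div_cancel_left₀ _ hx.1.ne'])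
      measurableSet_Ioo)
  exact ⟨g, hcont, by simpa using hg0, hEq⟩

/-- Any f in the form domain W^{1,2} (f ∈ L²((0,1), w dx), locally absolutely continuous on
(0,1) with derivative f', and ∫₀¹ p|f'|² < ∞) extends continuously to [0,1) with value 0
at 0. -/
theorem form_domain_continuous_vanishes_at_zero (ε : ℝ) (hε : ε ∈ Ioo (0:ℝ) 2)
    (f f' : ℝ → ℂ)
    (hAC : ∀ a ∈ Ioo (0:ℝ) 1, ∀ b ∈ Ioo (0:ℝ) 1,
      IntervalIntegrable f' volume a b ∧ f b - f a = ∫ x in a..b, f' x)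
    (hL2 : IntegrableOn (fun x => ‖f x‖ ^ 2 * ww ε x) (Ioo (0:ℝ) 1) volume)
    (hQ : IntegrableOn (fun x => pp ε x * ‖f' x‖ ^ 2) (Ioo (0:ℝ) 1) volume) :
    ∃ g : ℝ → ℂ, ContinuousOn g (Ico (0:ℝ) 1) ∧ g 0 = 0 ∧ EqOn g f (Ioo (0:ℝ) 1) :=
  form_domain_continuous_vanishes_at_zero_general ε f f' hAC hL2 hQ
end

section
/- Asymptotically, c(s) ∼ 2^{-1/2} s^{1/2}, c'(s) ∼ 2^{-3/2} s^{-1/2}, and c''(s) ∼ −2^{-5/2} s^{-3/2} as s → 0+. -/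
open MeasureTheory Set Filter

noncomputable def betaIntegrand (y : ℝ) : ℝ :=
  y ^ (-(1:ℝ)/2) * (1 - y) ^ (-(1:ℝ)/2) * (1 + y) ^ (-(1:ℝ)/2)

noncomputable def psi (t : ℝ) : ℝ := ∫ y in Ioo (0:ℝ) t, betaIntegrand y

noncomputable def cfun (ε : ℝ) (φ : ℝ → ℝ) (s : ℝ) : ℝ :=
  (ww ε (φ s) * pp ε (φ s)) ^ (-(1:ℝ)/4)

/-
On `(0, 1)`, `c = k ∘ φ` with `k(t) = t^{1/4} (1 - t)^q (1 + t)^r`, and `φ' = 1 / β(φ)`. So every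
derivative in `s` is the operator `β⁻¹ d/dt` in the variable `t = φ s`, which maps
`t^p (1 - t)^q (1 + t)^r` to a combination of such terms whose leading one is `p t^{p - 1/2}`.
Hence `c, c', c''` behave like `t^{1/4}, t^{-1/4}/4, -t^{-3/4}/16` as `t → 0+`. Finally
`β(y) ∼ y^{-1/2}` gives `ψ(t) ∼ 2 √t`, i.e. `t ∼ s² / 4`.
-/

open Real Topology

noncomputable def triPow (p q r t : ℝ) : ℝ := t ^ p * (1 - t) ^ q * (1 + t) ^ r

section TriPow

variable {t : ℝ}

lemma triPow_pos (ht : t ∈ Ioo (0:ℝ) 1) (p q r : ℝ) : 0 < triPow p q r t := by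
  obtain ⟨h0, h1⟩ := ht
  unfold triPow
  have := rpow_pos_of_pos h0 p
  have := rpow_pos_of_pos (sub_pos.2 h1) q
  have := rpow_pos_of_pos (by linarith : 0 < 1 + t) r
  positivity

lemma triPow_mul (ht : t ∈ Ioo (0:ℝ) 1) (p q r p' q' r' : ℝ) :
    triPow p q r t * triPow p' q' r' t = triPow (p + p') (q + q') (r + r') t := by
  obtain ⟨h0, h1⟩ := ht
  simp only [triPow, rpow_add h0, rpow_add (sub_pos.2 h1), rpow_add (by linarith : 0 < 1 + t)]
  ring

lemma triPow_rpow (ht : t ∈ Ioo (0:ℝ) 1) (p q r c : ℝ) :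
    triPow p q r t ^ c = triPow (p * c) (q * c) (r * c) t := by
  obtain ⟨h0, h1⟩ := ht
  have h1t : 0 < 1 - t := sub_pos.2 h1
  have h2t : 0 < 1 + t := by linarith
  simp only [triPow, rpow_mul h0.le, rpow_mul h1t.le, rpow_mul h2t.le]
  rw [mul_rpow (by positivity) (by positivity), mul_rpow (by positivity) (by positivity)]

lemma betaIntegrand_eq_triPow (y : ℝ) : betaIntegrand y = triPow (-1/2) (-1/2) (-1/2) y := by
  simp only [betaIntegrand, triPow, neg_div]

lemma ww_mul_pp (ε : ℝ) (ht : t ∈ Ioo (0:ℝ) 1) :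
    ww ε t * pp ε t = triPow (-1) (1 + 2/ε) (1 - 2/ε) t := by
  have key : ww ε t * pp ε t =
      triPow (-1) 0 0 t * triPow 0 (1/ε) (-1/ε) t * triPow 0 (1 + 1/ε) (1 - 1/ε) t := by
    simp only [ww, pp, triPow, rpow_neg_one, rpow_zero, neg_div]
    ring
  rw [key, triPow_mul ht, triPow_mul ht]
  congr 1 <;> ring

/-- `betaDeriv triPow p q r` is `(d/dt) triPow p q r` divided by `psi' = betaIntegrand`, i.e. the
derivative in the variable `s = psi t`; iterating it gives the higher derivatives. -/
noncomputable def betaDeriv (F : ℝ → ℝ → ℝ → ℝ → ℝ) (p q r t : ℝ) : ℝ :=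
  p * F (p - 1/2) (q + 1/2) (r + 1/2) t - q * F (p + 1/2) (q - 1/2) (r + 1/2) t
    + r * F (p + 1/2) (q + 1/2) (r - 1/2) t

lemma hasDerivAt_triPow (ht : t ∈ Ioo (0:ℝ) 1) (p q r : ℝ) :
    HasDerivAt (triPow p q r) (betaDeriv triPow p q r t * betaIntegrand t) t := by
  obtain ⟨h0, h1⟩ := ht
  have H1 : HasDerivAt (fun t : ℝ => t ^ p) (p * t ^ (p - 1)) t :=
    hasDerivAt_rpow_const (Or.inl h0.ne')
  have H2 : HasDerivAt (fun t : ℝ => (1 - t) ^ q) (-1 * q * (1 - t) ^ (q - 1)) t := by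
    simpa using ((hasDerivAt_id t).const_sub 1).rpow_const (p := q) (Or.inl (by simp; linarith))
  have H3 : HasDerivAt (fun t : ℝ => (1 + t) ^ r) (1 * r * (1 + t) ^ (r - 1)) t := by
    simpa using ((hasDerivAt_id t).const_add 1).rpow_const (p := r) (Or.inl (by simp; linarith))
  refine ((H1.mul H2).mul H3).congr_deriv ?_
  rw [betaIntegrand_eq_triPow]
  simp only [betaDeriv, add_mul, sub_mul, mul_assoc, triPow_mul ⟨h0, h1⟩]
  simp only [triPow, Pi.mul_apply]
  ring_nf

lemma hasDerivAt_betaDeriv_comp {F G : ℝ → ℝ → ℝ → ℝ → ℝ} {φ : ℝ → ℝ} {s : ℝ}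
    (h : ∀ p q r, HasDerivAt (fun s => F p q r (φ s)) (G p q r (φ s)) s) (p q r : ℝ) :
    HasDerivAt (fun s => betaDeriv F p q r (φ s)) (betaDeriv G p q r (φ s)) s :=
  (((h _ _ _).const_mul p).sub ((h _ _ _).const_mul q)).add ((h _ _ _).const_mul r)

lemma cfun_eq_triPow (ε : ℝ) {φ : ℝ → ℝ} {s : ℝ} (hs : φ s ∈ Ioo (0:ℝ) 1) :
    cfun ε φ s = triPow (1/4) (-(1 + 2/ε)/4) (-(1 - 2/ε)/4) (φ s) := by
  rw [cfun, ww_mul_pp ε hs, triPow_rpow hs]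
  ring_nf

end TriPow

section Limits

lemma tendsto_div_rpow_of_lt {f : ℝ → ℝ} {e e' L : ℝ} (he : e < e')
    (h : Tendsto (fun t => f t / t ^ e') (𝓝[>] 0) (𝓝 L)) :
    Tendsto (fun t => f t / t ^ e) (𝓝[>] 0) (𝓝 0) := by
  have hpow : Tendsto (fun t : ℝ => t ^ (e' - e)) (𝓝[>] 0) (𝓝 0) := by
    have := (continuousAt_rpow_const 0 (e' - e) (Or.inr (sub_pos.2 he).le)).tendsto
    rw [zero_rpow (sub_pos.2 he).ne'] at this
    exact this.mono_left nhdsWithin_le_nhds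
  have := hpow.mul h
  rw [zero_mul] at this
  refine this.congr' ?_
  filter_upwards [self_mem_nhdsWithin] with t (ht : 0 < t)
  rw [rpow_sub ht]
  field_simp

lemma tendsto_triPow_div_rpow (p q r : ℝ) :
    Tendsto (fun t => triPow p q r t / t ^ p) (𝓝[>] 0) (𝓝 1) := by
  have hcont : ContinuousAt (fun t : ℝ => (1 - t) ^ q * (1 + t) ^ r) 0 := by
    fun_prop (disch := norm_num)
  have := hcont.tendsto.mono_left (nhdsWithin_le_nhds (s := Ioi 0))
  simp only [sub_zero, add_zero, one_rpow, mul_one] at this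
  refine this.congr' ?_
  filter_upwards [self_mem_nhdsWithin] with t (ht : 0 < t)
  have := (rpow_pos_of_pos ht p).ne'
  simp only [triPow]
  field_simp

lemma tendsto_betaDeriv_div_rpow {F : ℝ → ℝ → ℝ → ℝ → ℝ} {k : ℝ} {L : ℝ → ℝ}
    (hF : ∀ p q r, Tendsto (fun t => F p q r t / t ^ (p - k)) (𝓝[>] 0) (𝓝 (L p)))
    (p q r : ℝ) :
    Tendsto (fun t => betaDeriv F p q r t / t ^ (p - k - 1/2)) (𝓝[>] 0)
      (𝓝 (p * L (p - 1/2))) := by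
  have h₁ := hF (p - 1/2) (q + 1/2) (r + 1/2)
  rw [sub_right_comm] at h₁
  have hlt : p - k - 1/2 < p + 1/2 - k := by linarith
  have h₂ := tendsto_div_rpow_of_lt hlt (hF (p + 1/2) (q - 1/2) (r + 1/2))
  have h₃ := tendsto_div_rpow_of_lt hlt (hF (p + 1/2) (q + 1/2) (r - 1/2))
  have := ((h₁.const_mul p).sub (h₂.const_mul q)).add (h₃.const_mul r)
  rw [mul_zero, mul_zero, sub_zero, add_zero] at this
  refine this.congr fun t => ?_
  simp only [betaDeriv]
  ring

end Limits

section Psi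

lemma betaIntegrand_pos {y : ℝ} (hy : y ∈ Ioo (0:ℝ) 1) : 0 < betaIntegrand y := by
  rw [betaIntegrand_eq_triPow]
  exact triPow_pos hy _ _ _

lemma continuousAt_betaIntegrand {y : ℝ} (hy : y ∈ Ioo (0:ℝ) 1) :
    ContinuousAt betaIntegrand y := by
  obtain ⟨h0, h1⟩ := hy
  unfold betaIntegrand
  have h1' : 0 < 1 - y := sub_pos.2 h1
  have h2' : 0 < 1 + y := by linarith
  fun_prop (disch := simp [h0.ne', h1'.ne', h2'.ne'])

variable {u y : ℝ}

lemma betaIntegrand_le (hu : u < 1) (hy : y ∈ Ioo 0 u) :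
    betaIntegrand y ≤ (1 - u) ^ (-(1:ℝ)/2) * y ^ (-(1:ℝ)/2) := by
  obtain ⟨h0, h1⟩ := hy
  have hy1 : (1 - y) ^ (-(1:ℝ)/2) ≤ (1 - u) ^ (-(1:ℝ)/2) :=
    rpow_le_rpow_of_nonpos (by linarith) (by linarith) (by norm_num)
  have hy2 : (1 + y) ^ (-(1:ℝ)/2) ≤ 1 :=
    rpow_le_one_of_one_le_of_nonpos (by linarith) (by norm_num)
  calc betaIntegrand y ≤ y ^ (-(1:ℝ)/2) * (1 - u) ^ (-(1:ℝ)/2) * 1 := by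
        unfold betaIntegrand; gcongr
    _ = _ := by ring

lemma le_betaIntegrand (hu : u ≤ 1) (hy : y ∈ Ioo 0 u) :
    (1 + u) ^ (-(1:ℝ)/2) * y ^ (-(1:ℝ)/2) ≤ betaIntegrand y := by
  obtain ⟨h0, h1⟩ := hy
  have hy1 : (1:ℝ) ≤ (1 - y) ^ (-(1:ℝ)/2) :=
    one_le_rpow_of_pos_of_le_one_of_nonpos (by linarith) (by linarith) (by norm_num)
  have hy2 : (1 + u) ^ (-(1:ℝ)/2) ≤ (1 + y) ^ (-(1:ℝ)/2) :=
    rpow_le_rpow_of_nonpos (by linarith) (by linarith) (by norm_num)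
  have := rpow_pos_of_pos (by linarith : (0:ℝ) < 1 + u) (-(1:ℝ)/2)
  calc (1 + u) ^ (-(1:ℝ)/2) * y ^ (-(1:ℝ)/2) = y ^ (-(1:ℝ)/2) * 1 * (1 + u) ^ (-(1:ℝ)/2) := by
        ring
    _ ≤ betaIntegrand y := by unfold betaIntegrand; gcongr

lemma integrableOn_rpow_neg_half : IntegrableOn (fun y : ℝ => y ^ (-(1:ℝ)/2)) (Ioo 0 u) :=
  (intervalIntegral.intervalIntegrable_rpow' (by norm_num)).def'.mono_set
    (Ioo_subset_Ioc_self.trans Ioc_subset_uIoc)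

lemma integral_rpow_neg_half (hu : 0 ≤ u) :
    ∫ y in Ioo (0:ℝ) u, y ^ (-(1:ℝ)/2) = 2 * u ^ ((1:ℝ)/2) := by
  rw [setIntegral_congr_set Ioo_ae_eq_Ioc, ← intervalIntegral.integral_of_le hu,
    integral_rpow (Or.inl (by norm_num)), zero_rpow (by norm_num)]
  norm_num
  ring

lemma integrableOn_betaIntegrand (hu : u < 1) : IntegrableOn betaIntegrand (Ioo 0 u) := by
  refine (integrableOn_rpow_neg_half.const_mul ((1 - u) ^ (-(1:ℝ)/2))).mono'
    (by unfold betaIntegrand; fun_prop) ?_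
  filter_upwards [ae_restrict_mem measurableSet_Ioo] with y hy
  rw [Real.norm_of_nonneg (betaIntegrand_pos ⟨hy.1, hy.2.trans hu⟩).le]
  exact betaIntegrand_le hu hy

variable {t : ℝ}

lemma le_psi (ht : t ∈ Ioo (0:ℝ) 1) :
    (1 + t) ^ (-(1:ℝ)/2) * (2 * t ^ ((1:ℝ)/2)) ≤ psi t := by
  rw [← integral_rpow_neg_half ht.1.le, ← integral_const_mul]
  exact setIntegral_mono_on (integrableOn_rpow_neg_half.const_mul _)
    (integrableOn_betaIntegrand ht.2) measurableSet_Ioo fun y hy => le_betaIntegrand ht.2.le hy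

lemma psi_le (ht : t ∈ Ioo (0:ℝ) 1) :
    psi t ≤ (1 - t) ^ (-(1:ℝ)/2) * (2 * t ^ ((1:ℝ)/2)) := by
  rw [← integral_rpow_neg_half ht.1.le, ← integral_const_mul]
  exact setIntegral_mono_on (integrableOn_betaIntegrand ht.2)
    (integrableOn_rpow_neg_half.const_mul _) measurableSet_Ioo fun y hy => betaIntegrand_le ht.2 hy

lemma psi_pos (ht : t ∈ Ioo (0:ℝ) 1) : 0 < psi t := by
  have := rpow_pos_of_pos (by linarith [ht.1] : (0:ℝ) < 1 + t) (-(1:ℝ)/2)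
  have := rpow_pos_of_pos ht.1 ((1:ℝ)/2)
  exact lt_of_lt_of_le (by positivity) (le_psi ht)

lemma tendsto_psi_div_sqrt :
    Tendsto (fun t => psi t / (2 * t ^ ((1:ℝ)/2))) (𝓝[>] 0) (𝓝 1) := by
  have hlim : ∀ a : ℝ, Tendsto (fun t : ℝ => (1 + a * t) ^ (-(1:ℝ)/2)) (𝓝[>] 0) (𝓝 1) := by
    intro a
    have : ContinuousAt (fun t : ℝ => (1 + a * t) ^ (-(1:ℝ)/2)) 0 := by
      fun_prop (disch := norm_num)
    simpa using this.tendsto.mono_left nhdsWithin_le_nhds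
  refine tendsto_of_tendsto_of_tendsto_of_le_of_le' (by simpa using hlim 1)
    (by simpa [sub_eq_add_neg] using hlim (-1)) ?_ ?_ <;>
  filter_upwards [Ioo_mem_nhdsGT one_pos] with t ht <;>
  have h2 : 0 < 2 * t ^ ((1:ℝ)/2) := by have := rpow_pos_of_pos ht.1 ((1:ℝ)/2); positivity
  · rw [le_div_iff₀ h2]; simpa using le_psi ht
  · rw [div_le_iff₀ h2]; simpa [sub_eq_add_neg] using psi_le ht

lemma hasDerivAt_psi (ht : t ∈ Ioo (0:ℝ) 1) : HasDerivAt psi (betaIntegrand t) t := by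
  have hint : IntervalIntegrable betaIntegrand volume 0 t :=
    (intervalIntegrable_iff_integrableOn_Ioo_of_le ht.1.le).2
      (integrableOn_betaIntegrand ht.2)
  have hmeas : Measurable betaIntegrand := by unfold betaIntegrand; fun_prop
  refine (intervalIntegral.integral_hasDerivAt_right hint
    hmeas.stronglyMeasurable.stronglyMeasurableAtFilter
    (continuousAt_betaIntegrand ht)).congr_of_eventuallyEq ?_
  filter_upwards [Ioi_mem_nhds ht.1] with x (hx : 0 < x)
  rw [psi, intervalIntegral.integral_of_le hx.le, setIntegral_congr_set Ioo_ae_eq_Ioc]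

lemma strictMonoOn_psi : StrictMonoOn psi (Ioo 0 1) := by
  refine strictMonoOn_of_deriv_pos (convex_Ioo 0 1)
    (fun t ht => (hasDerivAt_psi ht).continuousAt.continuousWithinAt) fun t ht => ?_
  rw [interior_Ioo] at ht
  rw [(hasDerivAt_psi ht).deriv]
  exact betaIntegrand_pos ht

lemma tendsto_div_psi_rpow {f : ℝ → ℝ} {e E L : ℝ}
    (hf : Tendsto (fun t => f t / t ^ e) (𝓝[>] 0) (𝓝 L)) (hE : E = 2 * e) :
    Tendsto (fun t => f t / psi t ^ E) (𝓝[>] 0) (𝓝 (L / 2 ^ E)) := by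
  have hR : Tendsto (fun t => (psi t / (2 * t ^ ((1:ℝ)/2))) ^ E) (𝓝[>] 0) (𝓝 1) := by
    simpa using tendsto_psi_div_sqrt.rpow_const (p := E) (Or.inl one_ne_zero)
  have := (hf.div hR one_ne_zero).div_const (2 ^ E)
  rw [div_one] at this
  refine this.congr' ?_
  filter_upwards [Ioo_mem_nhdsGT one_pos] with t ht
  have hsqrt : 0 < t ^ ((1:ℝ)/2) := rpow_pos_of_pos ht.1 _
  have hR0 : 0 < psi t / (2 * t ^ ((1:ℝ)/2)) := div_pos (psi_pos ht) (by positivity)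
  have hpsi : psi t ^ E = (psi t / (2 * t ^ ((1:ℝ)/2))) ^ E * 2 ^ E * t ^ e := by
    conv_lhs => rw [← div_mul_cancel₀ (psi t) (by positivity : 2 * t ^ ((1:ℝ)/2) ≠ 0)]
    rw [mul_rpow hR0.le (by positivity), mul_rpow zero_le_two hsqrt.le, ← rpow_mul ht.1.le,
      show (1:ℝ)/2 * E = e by rw [hE]; ring, mul_assoc]
  have := (rpow_pos_of_pos hR0 E).ne'
  have := (rpow_pos_of_pos ht.1 e).ne'
  have := (rpow_pos_of_pos two_pos E).ne'
  simp only [Pi.div_apply, hpsi]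
  field_simp

end Psi

lemma continuousAt_of_leftInvOn {ψ φ : ℝ → ℝ} {I U : Set ℝ} (hψ : StrictMonoOn ψ I)
    (hψc : ContinuousOn ψ I) (hI : IsOpen I) (hU : IsOpen U) (hφ : MapsTo φ U I)
    (hinv : LeftInvOn ψ φ U) {s : ℝ} (hs : s ∈ U) : ContinuousAt φ s := by
  have hmono : MonotoneOn φ U := fun a ha b hb hab =>
    (hψ.le_iff_le (hφ ha) (hφ hb)).1 (by rwa [hinv ha, hinv hb])
  refine continuousAt_of_monotoneOn_of_image_mem_nhds hmono (hU.mem_nhds hs) ?_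
  -- every `t` near `φ s` is `φ (ψ t)`, by injectivity of `ψ`
  have hnhds : I ∩ ψ ⁻¹' U ∈ 𝓝 (φ s) :=
    inter_mem (hI.mem_nhds (hφ hs)) ((hψc.continuousAt (hI.mem_nhds (hφ hs))).preimage_mem_nhds
      (by rw [hinv hs]; exact hU.mem_nhds hs))
  refine mem_of_superset hnhds ?_
  rintro t ⟨htI, htU⟩
  exact ⟨ψ t, htU, hψ.injOn (hφ htU) htI (hinv htU)⟩

section Inverse

variable {φ : ℝ → ℝ}

lemma mapsTo_Ioo_of_leftInvOn_psi (hmaps : MapsTo φ (Icc 0 (psi 1)) (Icc 0 1))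
    (hinv : LeftInvOn psi φ (Ioo 0 (psi 1))) : MapsTo φ (Ioo 0 (psi 1)) (Ioo 0 1) := by
  intro s hs
  obtain ⟨h0, h1⟩ := hmaps (Ioo_subset_Icc_self hs)
  refine ⟨h0.lt_of_ne fun h => hs.1.ne ?_, h1.lt_of_ne fun h => hs.2.ne ?_⟩
  · rw [← hinv hs, ← h]
    simp [psi]
  · rw [← hinv hs, h]

lemma hasDerivAt_inverse_psi (hφ : MapsTo φ (Ioo 0 (psi 1)) (Ioo 0 1))
    (hinv : LeftInvOn psi φ (Ioo 0 (psi 1))) {s : ℝ} (hs : s ∈ Ioo 0 (psi 1)) :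
    HasDerivAt φ (betaIntegrand (φ s))⁻¹ s := by
  have hcont : ContinuousAt φ s :=
    continuousAt_of_leftInvOn strictMonoOn_psi
      (fun t ht => (hasDerivAt_psi ht).continuousAt.continuousWithinAt) isOpen_Ioo isOpen_Ioo
      hφ hinv hs
  exact HasDerivAt.of_local_left_inverse hcont (hasDerivAt_psi (hφ hs))
    (betaIntegrand_pos (hφ hs)).ne' (eventually_of_mem (isOpen_Ioo.mem_nhds hs) fun _ hu => hinv hu)

lemma hasDerivAt_triPow_comp_inverse_psi (hφ : MapsTo φ (Ioo 0 (psi 1)) (Ioo 0 1))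
    (hinv : LeftInvOn psi φ (Ioo 0 (psi 1))) {s : ℝ} (hs : s ∈ Ioo 0 (psi 1)) (p q r : ℝ) :
    HasDerivAt (fun s => triPow p q r (φ s)) (betaDeriv triPow p q r (φ s)) s := by
  refine ((hasDerivAt_triPow (hφ hs) p q r).comp s
    (hasDerivAt_inverse_psi hφ hinv hs)).congr_deriv ?_
  rw [mul_assoc, mul_inv_cancel₀ (betaIntegrand_pos (hφ hs)).ne', mul_one]

lemma tendsto_inverse_psi (hφ : MapsTo φ (Ioo 0 (psi 1)) (Ioo 0 1))
    (hinv : LeftInvOn psi φ (Ioo 0 (psi 1))) :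
    Tendsto φ (𝓝[Ioo 0 (psi 1)] 0) (𝓝[>] 0) := by
  refine tendsto_nhdsWithin_iff.2 ⟨tendsto_order.2 ⟨fun a ha => ?_, fun b hb => ?_⟩, ?_⟩
  · filter_upwards [self_mem_nhdsWithin] with s hs using ha.trans (hφ hs).1
  · set δ := min b (1/2)
    have hδ : δ ∈ Ioo (0:ℝ) 1 :=
      ⟨lt_min hb (by norm_num), (min_le_right _ _).trans_lt (by norm_num)⟩
    filter_upwards [self_mem_nhdsWithin, nhdsWithin_le_nhds (Iio_mem_nhds (psi_pos hδ))]
      with s hs (hsδ : s < psi δ)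
    refine lt_of_lt_of_le ?_ (min_le_left b (1/2))
    rwa [← strictMonoOn_psi.lt_iff_lt (hφ hs) hδ, hinv hs]
  · filter_upwards [self_mem_nhdsWithin] with s hs using (hφ hs).1

lemma tendsto_div_rpow_of_eqOn_comp_inverse_psi (hφ : MapsTo φ (Ioo 0 (psi 1)) (Ioo 0 1))
    (hinv : LeftInvOn psi φ (Ioo 0 (psi 1))) {f g : ℝ → ℝ} {e E L C : ℝ}
    (hfg : EqOn f (g ∘ φ) (Ioo 0 (psi 1)))
    (hg : Tendsto (fun t => g t / t ^ e) (𝓝[>] 0) (𝓝 L)) (hE : E = 2 * e)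
    (hC : L / 2 ^ E = C) (hC0 : C ≠ 0) :
    Tendsto (fun s => f s / (C * s ^ E)) (𝓝[Ioo 0 (psi 1)] 0) (𝓝 1) := by
  have := ((tendsto_div_psi_rpow hg hE).div_const C).comp (tendsto_inverse_psi hφ hinv)
  rw [hC, div_self hC0] at this
  refine this.congr' ?_
  filter_upwards [self_mem_nhdsWithin] with s hs
  rw [Function.comp_apply, hinv hs, hfg hs, Function.comp_apply, div_div, mul_comm]

end Inverse

theorem cfun_asymptotics_zero_general (ε : ℝ) (φ : ℝ → ℝ)
    (hmaps : MapsTo φ (Icc 0 (psi 1)) (Icc (0:ℝ) 1))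
    (hright : ∀ s ∈ Icc 0 (psi 1), psi (φ s) = s) :
    Tendsto (fun s => cfun ε φ s / ((2:ℝ) ^ (-(1:ℝ)/2) * s ^ ((1:ℝ)/2)))
        (nhdsWithin 0 (Ioo 0 (psi 1))) (nhds 1) ∧
      Tendsto (fun s => deriv (cfun ε φ) s / ((2:ℝ) ^ (-(3:ℝ)/2) * s ^ (-(1:ℝ)/2)))
        (nhdsWithin 0 (Ioo 0 (psi 1))) (nhds 1) ∧
      Tendsto (fun s => deriv (deriv (cfun ε φ)) s /
          (-(2:ℝ) ^ (-(5:ℝ)/2) * s ^ (-(3:ℝ)/2)))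
        (nhdsWithin 0 (Ioo 0 (psi 1))) (nhds 1) := by
  have hinv : LeftInvOn psi φ (Ioo 0 (psi 1)) := fun s hs => hright s (Ioo_subset_Icc_self hs)
  have hφ := mapsTo_Ioo_of_leftInvOn_psi hmaps hinv
  have hc : EqOn (cfun ε φ) (triPow (1/4) _ _ ∘ φ) (Ioo 0 (psi 1)) := fun s hs =>
    cfun_eq_triPow ε (hφ hs)
  have hc' : EqOn (deriv (cfun ε φ)) (betaDeriv triPow (1/4) _ _ ∘ φ) (Ioo 0 (psi 1)) :=
    fun s hs => (hc.deriv isOpen_Ioo hs).trans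
      (hasDerivAt_triPow_comp_inverse_psi hφ hinv hs _ _ _).deriv
  have hc'' : EqOn (deriv (deriv (cfun ε φ))) (betaDeriv (betaDeriv triPow) (1/4) _ _ ∘ φ)
      (Ioo 0 (psi 1)) := fun s hs => (hc'.deriv isOpen_Ioo hs).trans
    (hasDerivAt_betaDeriv_comp (hasDerivAt_triPow_comp_inverse_psi hφ hinv hs) _ _ _).deriv
  have hlim : ∀ p q r, Tendsto (fun t => betaDeriv triPow p q r t / t ^ (p - 1/2)) (𝓝[>] 0)
      (𝓝 (p * 1)) := by
    simpa using tendsto_betaDeriv_div_rpow (k := 0) (L := fun _ => 1)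
      (by simpa using tendsto_triPow_div_rpow)
  refine ⟨tendsto_div_rpow_of_eqOn_comp_inverse_psi hφ hinv hc (tendsto_triPow_div_rpow _ _ _)
      (by norm_num) ?_ (by positivity),
    tendsto_div_rpow_of_eqOn_comp_inverse_psi hφ hinv hc' (hlim _ _ _) (by norm_num) ?_
      (by positivity),
    tendsto_div_rpow_of_eqOn_comp_inverse_psi hφ hinv hc''
      (tendsto_betaDeriv_div_rpow (k := 1/2) hlim _ _ _) (by norm_num) ?_
      (neg_ne_zero.2 (by positivity))⟩
  · rw [div_eq_iff (by positivity), ← rpow_add two_pos]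
    norm_num
  · rw [div_eq_iff (by positivity), ← rpow_add two_pos]
    norm_num
  · rw [div_eq_iff (by positivity), neg_mul, ← rpow_add two_pos]
    norm_num

/-- As s → 0+: c(s) ∼ 2^{-1/2} s^{1/2}, c'(s) ∼ 2^{-3/2} s^{-1/2},
c''(s) ∼ −2^{-5/2} s^{-3/2}. -/
theorem cfun_asymptotics_zero (ε : ℝ) (hε : ε ∈ Ioo (0:ℝ) 2) (φ : ℝ → ℝ)
    (hmaps : MapsTo φ (Icc 0 (psi 1)) (Icc (0:ℝ) 1))
    (hleft : ∀ t ∈ Icc (0:ℝ) 1, φ (psi t) = t)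
    (hright : ∀ s ∈ Icc 0 (psi 1), psi (φ s) = s) :
    Tendsto (fun s => cfun ε φ s / ((2:ℝ) ^ (-(1:ℝ)/2) * s ^ ((1:ℝ)/2)))
        (nhdsWithin 0 (Ioo 0 (psi 1))) (nhds 1) ∧
      Tendsto (fun s => deriv (cfun ε φ) s / ((2:ℝ) ^ (-(3:ℝ)/2) * s ^ (-(1:ℝ)/2)))
        (nhdsWithin 0 (Ioo 0 (psi 1))) (nhds 1) ∧
      Tendsto (fun s => deriv (deriv (cfun ε φ)) s /
          (-(2:ℝ) ^ (-(5:ℝ)/2) * s ^ (-(3:ℝ)/2)))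
        (nhdsWithin 0 (Ioo 0 (psi 1))) (nhds 1) :=
  cfun_asymptotics_zero_general ε φ hmaps hright
end
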